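/- For each n ≥ 1, the number of spanning trees of the level-n Schreier graph B_n of the Basilica group is τ(B_n) = 2^{(2^{n+2} + 3n − 5)/6} if n is odd, and τ(B_n) = 2^{(2^{n+2} + 3n − 4)/6} if n is even. -/

import Mathlib

/-- A finite multigraph on a vertex set `V`: a finite edge type together with an
incidence map assigning to each edge its unordered pair of endpoints
(loops and parallel edges are allowed). -/
structure Multigraph (V : Type) where
  /-- the type of edges -/
  Edge : Type
  /-- the edge type is finite -/
  fintypeEdge : Fintype Edge
  /-- equality of edges is decidable -/
  decEqEdge : DecidableEq Edge
  /-- the unordered pair of endpoints of an edge -/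
  inc : Edge → Sym2 V

attribute [instance] Multigraph.fintypeEdge Multigraph.decEqEdge

namespace Multigraph

variable {V : Type} [Fintype V] [DecidableEq V]

/-- The simple graph underlying the spanning subgraph of `G` with edge set `A`:
two distinct vertices are adjacent iff some edge in `A` has them as endpoints. -/
def toSimple (G : Multigraph V) (A : Finset G.Edge) : SimpleGraph V :=
  SimpleGraph.fromRel fun u v => ∃ e ∈ A, G.inc e = s(u, v)

/-- `G.comps A` is the number `k(A)` of connected components of the spanning
subgraph of `G` with edge set `A`. -/
noncomputable def comps (G : Multigraph V) (A : Finset G.Edge) : ℕ :=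
  Nat.card (G.toSimple A).ConnectedComponent

/-- The rank `r(A) = |V| - k(A)` of the spanning subgraph with edge set `A`. -/
noncomputable def rk (G : Multigraph V) (A : Finset G.Edge) : ℕ :=
  Fintype.card V - G.comps A

/-- The nullity `n(A) = |E(A)| - r(A)` of the spanning subgraph with edge set `A`. -/
noncomputable def nullity (G : Multigraph V) (A : Finset G.Edge) : ℕ :=
  A.card - G.rk A

/-- The Tutte polynomial
`T(G; x, y) = ∑_{A ⊆ E} (x - 1) ^ (r(E) - r(A)) * (y - 1) ^ n(A)`,
as a function of two real variables. -/
noncomputable def tutte (G : Multigraph V) (x y : ℝ) : ℝ :=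
  ∑ A ∈ (Finset.univ : Finset G.Edge).powerset,
    (x - 1) ^ (G.rk Finset.univ - G.rk A) * (y - 1) ^ (G.nullity A)

/-- The reliability polynomial `R(G, p)`: the probability that, when each edge is
independently active with probability `p`, every pair of vertices is joined by a
path of active edges (i.e. the spanning subgraph of active edges is connected). -/
noncomputable def reliability (G : Multigraph V) (p : ℝ) : ℝ :=
  ∑ A ∈ (Finset.univ : Finset G.Edge).powerset,
    if G.comps A = 1 then p ^ A.card * (1 - p) ^ (Fintype.card G.Edge - A.card) else 0

/-- The complexity `τ(G)`: the number of spanning subtrees of `G`, i.e. spanning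
subgraphs which are connected and have `|V| - 1` edges. -/
noncomputable def treeCount (G : Multigraph V) : ℕ :=
  Nat.card {A : Finset G.Edge // G.comps A = 1 ∧ A.card + 1 = Fintype.card V}

/-- The number of connected spanning subgraphs of `G`. -/
noncomputable def connCount (G : Multigraph V) : ℕ :=
  Nat.card {A : Finset G.Edge // G.comps A = 1}

/-- The number of spanning forests of `G`: spanning subgraphs containing no cycle,
i.e. with `|E(A)| = |V| - k(A)` (zero nullity). -/
noncomputable def forestCount (G : Multigraph V) : ℕ :=
  Nat.card {A : Finset G.Edge // A.card + G.comps A = Fintype.card V}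

/-- `σ` is an orientation of `G` if it assigns to every edge an ordered pair of
vertices whose underlying unordered pair is the pair of endpoints of the edge. -/
def IsOrientation (G : Multigraph V) (σ : G.Edge → V × V) : Prop :=
  ∀ e, s((σ e).1, (σ e).2) = G.inc e

/-- The number of acyclic orientations of `G`: orientations admitting no directed
cycle. -/
noncomputable def acyclicOrientationCount (G : Multigraph V) : ℕ :=
  Nat.card {σ : G.Edge → V × V //
    G.IsOrientation σ ∧ ∀ v : V, ¬ Relation.TransGen (fun u w => ∃ e, σ e = (u, w)) v v}

/-- A proper coloring of `G`: the two endpoints of every edge receive distinct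
colors. -/
def ProperColoring (G : Multigraph V) {α : Type} (c : V → α) : Prop :=
  ∀ e, ¬ (Sym2.map c (G.inc e)).IsDiag

/-- The number of proper colorings of `G` with `k` colors (the value `χ(G, k)` of
the chromatic polynomial at the natural number `k`). -/
noncomputable def chromCount (G : Multigraph V) (k : ℕ) : ℕ :=
  Nat.card {c : V → Fin k // G.ProperColoring c}

end Multigraph

mutual
  /-- The generator `a = e(b, id)` of the Basilica group, acting on the `n`-th
  level of the binary rooted tree: `a(1w) = 1w` and `a(0w) = 0 b(w)`. -/
  def basA : (n : ℕ) → (Fin n → Bool) → (Fin n → Bool)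
    | 0, v => v
    | n + 1, v =>
      match v 0 with
      | true => v
      | false => Fin.cons false (basB n (Fin.tail v))

  /-- The generator `b = ε(a, id)` of the Basilica group, acting on the `n`-th
  level of the binary rooted tree: `b(1w) = 0w` and `b(0w) = 1 a(w)`. -/
  def basB : (n : ℕ) → (Fin n → Bool) → (Fin n → Bool)
    | 0, v => v
    | n + 1, v =>
      match v 0 with
      | true => Fin.cons false (Fin.tail v)
      | false => Fin.cons true (basA n (Fin.tail v))
end

/-- The generator of the Basilica group indexed by a boolean tag. -/
def basGen (n : ℕ) : Bool → (Fin n → Bool) → (Fin n → Bool)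
  | true => basA n
  | false => basB n

/-- The level-`n` Schreier graph `B_n` of the Basilica group: vertices are the
binary words of length `n`, and for each generator `s ∈ {a, b}` and each vertex
`v` there is one edge joining `v` and `s(v)` (a loop when `s(v) = v`). -/
def basilica (n : ℕ) : Multigraph (Fin n → Bool) where
  Edge := Bool × (Fin n → Bool)
  fintypeEdge := inferInstance
  decEqEdge := inferInstance
  inc := fun e => s(e.2, basGen n e.1 e.2)

/-!
The Schreier graph `B_n` of the generators `a, b` is a cactus whose cycles are the orbits of
`a` and of `b` (a fixed point giving a loop): it is connected and the cycle ranks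
`|V| - #orbits(a)` and `|V| - #orbits(b)` add up to `|V| - 1`. In such a graph the spanning
trees are exactly what is left after deleting one edge from every orbit of every generator, so
`τ(B_n) = T(a_n) T(b_n)`, where `T(f)` counts the orbit transversals of `f`.

Self-similarity computes these numbers: `a_{n+1}` acts as `b_n` on the words `0w` and fixes the
words `1w`, so `T(a_{n+1}) = T(b_n)`; the orbits of `b_{n+1}` are the sets `{0, 1} × O` for the
orbits `O` of `a_n`, so an orbit transversal of `b_{n+1}` is an orbit transversal of `a_n` with a
first letter attached to each of its points, and `T(b_{n+1}) = T(a_n) 2^{o_n}` with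
`o_n = #orbits(a_n)`. Hence `τ(B_{n+1}) = τ(B_n) 2^{o_n}`, while
`3 o_n = 2^{n+1} + 1 + (n mod 2)`; summing the exponents gives the formula.
-/

open Finset

namespace Multigraph

variable {V : Type}

lemma toSimple_adj {G : Multigraph V} {A : Finset G.Edge} {u v : V} :
    (G.toSimple A).Adj u v ↔ u ≠ v ∧ ∃ e ∈ A, G.inc e = s(u, v) := by
  simp only [toSimple, SimpleGraph.fromRel_adj, Sym2.eq_swap (a := v)]
  exact and_congr_right fun _ => or_self_iff

lemma comps_eq_one_iff {G : Multigraph V} {A : Finset G.Edge} :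
    G.comps A = 1 ↔ (G.toSimple A).Connected := by
  rw [comps, Nat.card_eq_one_iff_unique, SimpleGraph.connected_iff]
  constructor
  · rintro ⟨hsub, ⟨c⟩⟩
    exact ⟨fun u v => SimpleGraph.ConnectedComponent.exact (Subsingleton.elim _ _),
      c.nonempty_supp.elim fun v _ => ⟨v⟩⟩
  · rintro ⟨hpre, ⟨v⟩⟩
    exact ⟨hpre.subsingleton_connectedComponent, ⟨(G.toSimple A).connectedComponentMk v⟩⟩

lemma card_le_card_add_one_of_connected [Fintype V] [DecidableEq V] {G : Multigraph V}
    {A : Finset G.Edge} (h : (G.toSimple A).Connected) : Fintype.card V ≤ #A + 1 := by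
  have hsub : (G.toSimple A).edgeSet ⊆ ↑(A.image G.inc) := by
    intro z
    induction z using Sym2.ind with
    | _ u v =>
      intro huv
      obtain ⟨-, e, he, hinc⟩ := toSimple_adj.mp huv
      exact mem_coe.mpr (mem_image.mpr ⟨e, he, hinc⟩)
  have hedges : Nat.card (G.toSimple A).edgeSet ≤ #A :=
    calc Nat.card (G.toSimple A).edgeSet ≤ Nat.card ↑(A.image G.inc : Set (Sym2 V)) :=
          Nat.card_mono (finite_toSet _) hsub
      _ = #(A.image G.inc) := by rw [Nat.card_coe_set_eq, Set.ncard_coe_finset]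
      _ ≤ #A := card_image_le
  have := h.card_vert_le_card_edgeSet_add_one
  rw [Nat.card_eq_fintype_card] at this
  omega

end Multigraph

namespace Equiv.Perm

section OrbitTransversal

variable {α : Type*}

def IsOrbitTransversal (f : Perm α) (R : Finset α) : Prop :=
  ∀ x, ∃! r, r ∈ R ∧ f.SameCycle x r

noncomputable def orbitCount (f : Perm α) : ℕ :=
  Nat.card (Quotient (SameCycle.setoid f))

theorem SameCycle.rel_of_forall_apply [Finite α] {f : Perm α} {r : α → α → Prop}
    (hr : Equivalence r) (h : ∀ x, r x (f x)) {x y : α} (hxy : f.SameCycle x y) : r x y := by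
  obtain ⟨k, -, rfl⟩ := hxy.exists_pow_eq'
  clear hxy
  induction k with
  | zero => exact hr.refl x
  | succ k ih =>
    rw [pow_succ', mul_apply]
    exact hr.trans ih (h _)

lemma surjective_mk_of_forall_exists_sameCycle {f : Perm α} {R : Finset α}
    (h : ∀ x, ∃ r ∈ R, f.SameCycle x r) :
    Function.Surjective fun r : R => Quotient.mk (SameCycle.setoid f) r.1 :=
  Quotient.ind fun x =>
    let ⟨r, hr, hxr⟩ := h x
    ⟨⟨r, hr⟩, Quotient.sound hxr.symm⟩

lemma isOrbitTransversal_iff_bijective {f : Perm α} {R : Finset α} :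
    f.IsOrbitTransversal R ↔
      Function.Bijective fun r : R => Quotient.mk (SameCycle.setoid f) r.1 := by
  constructor
  · intro h
    refine ⟨fun r r' hrr' => ?_, surjective_mk_of_forall_exists_sameCycle fun x => ?_⟩
    · obtain ⟨d, -, hd⟩ := h r
      exact Subtype.ext ((hd _ ⟨r.2, .rfl⟩).trans (hd _ ⟨r'.2, Quotient.eq.mp hrr'⟩).symm)
    · obtain ⟨r, ⟨hr, hxr⟩, -⟩ := h x
      exact ⟨r, hr, hxr⟩
  · rintro ⟨hinj, hsurj⟩ x
    obtain ⟨r, hr⟩ := hsurj (Quotient.mk _ x)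
    refine ⟨r, ⟨r.2, (Quotient.eq.mp hr).symm⟩, fun r' ⟨hr', hxr'⟩ => ?_⟩
    exact congrArg Subtype.val (@hinj ⟨r', hr'⟩ r (hr.trans (Quotient.sound hxr')).symm)

lemma IsOrbitTransversal.card_eq {f : Perm α} {R : Finset α} (h : f.IsOrbitTransversal R) :
    #R = f.orbitCount := by
  rw [orbitCount, ← Nat.card_eq_finsetCard]
  exact Nat.card_eq_of_bijective _ (isOrbitTransversal_iff_bijective.mp h)

variable [Finite α] {f : Perm α} {R : Finset α}

lemma orbitCount_le_card (h : ∀ x, ∃ r ∈ R, f.SameCycle x r) : f.orbitCount ≤ #R := by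
  rw [orbitCount, ← Nat.card_eq_finsetCard]
  exact Nat.card_le_card_of_surjective _ (surjective_mk_of_forall_exists_sameCycle h)

lemma isOrbitTransversal_of_card_le (h : ∀ x, ∃ r ∈ R, f.SameCycle x r)
    (hcard : #R ≤ f.orbitCount) : f.IsOrbitTransversal R :=
  isOrbitTransversal_iff_bijective.mpr <|
    (surjective_mk_of_forall_exists_sameCycle h).bijective_of_nat_card_le
      (by rwa [Nat.card_eq_finsetCard])

end OrbitTransversal

section Fintype

variable {α : Type*} [Fintype α] (f : Perm α)

lemma orbitCount_le_card_univ : f.orbitCount ≤ Fintype.card α := by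
  simpa using orbitCount_le_card (R := univ) fun x => ⟨x, mem_univ x, .rfl⟩

lemma exists_isOrbitTransversal [DecidableEq α] : ∃ R, f.IsOrbitTransversal R := by
  have hout (x : α) : f.SameCycle (Quotient.mk (SameCycle.setoid f) x).out x :=
    Quotient.mk_out (s := SameCycle.setoid f) x
  refine ⟨univ.image fun x => (Quotient.mk (SameCycle.setoid f) x).out, fun x => ?_⟩
  refine ⟨_, ⟨mem_image_of_mem _ (mem_univ x), (hout x).symm⟩, ?_⟩
  rintro r ⟨hr, hxr⟩
  obtain ⟨y, -, rfl⟩ := mem_image.mp hr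
  exact congrArg _ (Quotient.sound ((hout y).symm.trans hxr.symm))

end Fintype

section ExtendDomain

variable {α β : Type*} {p : β → Prop} [DecidablePred p] {g : Perm α} {f : α ≃ Subtype p}

lemma sameCycle_extendDomain_apply_left {x : α} {b : β} :
    (g.extendDomain f).SameCycle (f x) b ↔ ∃ x', b = f x' ∧ g.SameCycle x x' := by
  constructor
  · rintro ⟨i, rfl⟩
    exact ⟨(g ^ i) x, by rw [← extendDomain_zpow, extendDomain_apply_image], i, rfl⟩
  · rintro ⟨x', rfl, h⟩
    exact sameCycle_extendDomain.mpr h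

lemma SameCycle.eq_of_not_extendDomain {b b' : β} (hb : ¬ p b)
    (h : (g.extendDomain f).SameCycle b b') : b' = b :=
  (h.eq_of_left (extendDomain_apply_not_subtype g f hb)).symm

variable [Fintype β] [DecidableEq β]

variable (f) in
def extendTransversal (R : Finset α) : Finset β :=
  R.map (f.toEmbedding.trans (Function.Embedding.subtype p)) ∪ ({b | ¬ p b} : Finset β)

lemma mem_extendTransversal {R : Finset α} {b : β} :
    b ∈ extendTransversal f R ↔ (∃ x ∈ R, b = f x) ∨ ¬ p b := by
  simp [extendTransversal, eq_comm]

lemma coe_mem_extendTransversal {R : Finset α} {x : α} :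
    (f x : β) ∈ extendTransversal f R ↔ x ∈ R := by
  simp [mem_extendTransversal, Subtype.ext_iff.symm.trans f.injective.eq_iff, (f x).2]

lemma isOrbitTransversal_extendTransversal_iff {R : Finset α} :
    (g.extendDomain f).IsOrbitTransversal (extendTransversal f R) ↔ g.IsOrbitTransversal R := by
  constructor
  · intro h x
    obtain ⟨r, ⟨hr, hxr⟩, huniq⟩ := h (f x)
    obtain ⟨x', rfl, hxx'⟩ := sameCycle_extendDomain_apply_left.mp hxr
    refine ⟨x', ⟨coe_mem_extendTransversal.mp hr, hxx'⟩, fun y ⟨hy, hxy⟩ => ?_⟩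
    refine f.injective (Subtype.ext (huniq _ ⟨?_, sameCycle_extendDomain.mpr hxy⟩))
    exact coe_mem_extendTransversal.mpr hy
  · intro h b
    by_cases hb : p b
    · obtain ⟨x, rfl⟩ : ∃ x, (f x : β) = b := ⟨f.symm ⟨b, hb⟩, by simp⟩
      obtain ⟨r, ⟨hr, hxr⟩, huniq⟩ := h x
      refine ⟨f r, ⟨coe_mem_extendTransversal.mpr hr, sameCycle_extendDomain.mpr hxr⟩,
        fun b' ⟨hb', hxb'⟩ => ?_⟩
      obtain ⟨x', rfl, hxx'⟩ := sameCycle_extendDomain_apply_left.mp hxb'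
      rw [huniq x' ⟨coe_mem_extendTransversal.mp hb', hxx'⟩]
    · exact ⟨b, ⟨mem_extendTransversal.mpr (.inr hb), .rfl⟩,
        fun b' ⟨_, hbb'⟩ => hbb'.eq_of_not_extendDomain hb⟩

lemma IsOrbitTransversal.eq_extendTransversal {R : Finset β}
    (h : (g.extendDomain f).IsOrbitTransversal R) :
    R = extendTransversal f
      (R.preimage (fun x => (f x : β)) (Subtype.val_injective.comp f.injective).injOn) := by
  ext b
  by_cases hb : p b
  · obtain ⟨x, rfl⟩ : ∃ x, (f x : β) = b := ⟨f.symm ⟨b, hb⟩, by simp⟩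
    rw [coe_mem_extendTransversal, mem_preimage]
  · obtain ⟨r, ⟨hr, hbr⟩, -⟩ := h b
    rw [hbr.eq_of_not_extendDomain hb] at hr
    simp [mem_extendTransversal, hb, hr]

lemma card_orbitTransversal_extendDomain :
    Nat.card {R // (g.extendDomain f).IsOrbitTransversal R} =
      Nat.card {R // g.IsOrbitTransversal R} := by
  refine (Nat.card_eq_of_bijective (fun R => ⟨extendTransversal f R.1,
    isOrbitTransversal_extendTransversal_iff.mpr R.2⟩) ⟨fun R R' h => ?_, fun R => ?_⟩).symm
  · ext x
    rw [← coe_mem_extendTransversal (f := f), ← coe_mem_extendTransversal (f := f) (R := R'.1)]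
    exact (congrArg (fun R : {R // _} => (f x : β) ∈ R.1) h).to_iff
  · have hR := R.2.eq_extendTransversal
    exact ⟨⟨_, isOrbitTransversal_extendTransversal_iff.mp (hR ▸ R.2)⟩,
      Subtype.ext hR.symm⟩

lemma orbitCount_extendDomain [Fintype α] [DecidableEq α] :
    (g.extendDomain f).orbitCount = g.orbitCount + #{b | ¬ p b} := by
  obtain ⟨R, hR⟩ := g.exists_isOrbitTransversal
  rw [← hR.card_eq, ← (isOrbitTransversal_extendTransversal_iff.mpr hR).card_eq,
    extendTransversal, card_union_of_disjoint, card_map]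
  refine disjoint_left.mpr fun b hb hb' => ?_
  obtain ⟨x, -, rfl⟩ := mem_map.mp hb
  exact (mem_filter.mp hb').2 (f x).2

end ExtendDomain

end Equiv.Perm

namespace Multigraph

variable {S V : Type} [Fintype S] [DecidableEq S] [Fintype V] [DecidableEq V]

-- Reducible, so that instance search and `simp` see `(schreier σ).Edge` as `S × V`.
abbrev schreier (σ : S → Equiv.Perm V) : Multigraph V where
  Edge := S × V
  fintypeEdge := inferInstance
  decEqEdge := inferInstance
  inc e := s(e.2, σ e.1 e.2)

variable {σ : S → Equiv.Perm V}

lemma schreier_rel_of_reachable {B : Finset (S × V)} {r : V → V → Prop}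
    (hr : Equivalence r) (hB : ∀ e ∈ B, r e.2 (σ e.1 e.2)) {u v : V}
    (huv : ((schreier σ).toSimple B).Reachable u v) : r u v := by
  obtain ⟨p⟩ := huv
  induction p with
  | nil => exact hr.refl _
  | cons hadj _ ih =>
    obtain ⟨-, e, he, hinc⟩ := toSimple_adj.mp hadj
    refine hr.trans ?_ ih
    rcases Sym2.eq_iff.mp hinc with ⟨rfl, rfl⟩ | ⟨rfl, rfl⟩
    · exact hB e he
    · exact hr.symm (hB e he)

lemma schreier_reachable_of_mem {A : Finset (S × V)} {e : S × V} (he : e ∈ A) :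
    ((schreier σ).toSimple A).Reachable e.2 (σ e.1 e.2) := by
  by_cases h : e.2 = σ e.1 e.2
  · rw [← h]
  · exact (toSimple_adj.mpr ⟨h, e, he, rfl⟩).reachable

lemma schreier_connected_of_forall_mem {A B : Finset (S × V)}
    (hB : ((schreier σ).toSimple B).Connected)
    (h : ∀ e ∈ B, ((schreier σ).toSimple A).Reachable e.2 (σ e.1 e.2)) :
    ((schreier σ).toSimple A).Connected :=
  (SimpleGraph.connected_iff _).mpr
    ⟨fun u v => schreier_rel_of_reachable (SimpleGraph.reachable_is_equivalence _) h
      (hB.preconnected u v), hB.nonempty⟩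

lemma schreier_reachable_of_forall_sameCycle {A : Finset (S × V)} {s : S} {v : V}
    (hA : ∀ w, (σ s).SameCycle v w → w ≠ v → (s, w) ∈ A) :
    ((schreier σ).toSimple A).Reachable v (σ s v) := by
  classical
  set f := σ s
  have hex : ∃ k, 0 < k ∧ (f ^ k) v = v :=
    ⟨orderOf f, orderOf_pos f, by rw [pow_orderOf_eq_one]; rfl⟩
  obtain ⟨hk0, hkv⟩ := Nat.find_spec hex
  have hpath (j : ℕ) (hj1 : 1 ≤ j) (hjk : j ≤ Nat.find hex) :
      ((schreier σ).toSimple A).Reachable (f v) ((f ^ j) v) := by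
    induction j, hj1 using Nat.le_induction with
    | base => rw [pow_one]
    | succ j hj ih =>
      have hne : (f ^ j) v ≠ v := fun h => Nat.find_min hex (by omega) ⟨by omega, h⟩
      rw [pow_succ', Equiv.Perm.mul_apply]
      exact (ih (by omega)).trans (schreier_reachable_of_mem
        (hA _ (Equiv.Perm.sameCycle_pow_right.mpr .rfl) hne))
  exact (hkv ▸ hpath _ hk0 le_rfl).symm

lemma sum_card_filter_not_mem_add_card (A : Finset (S × V)) :
    #A + ∑ s, #{v | (s, v) ∉ A} = Fintype.card S * Fintype.card V := by
  have hA : #A = ∑ s, #{v | (s, v) ∈ A} := by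
    simp only [card_filter]
    rw [← Fintype.sum_prod_type (fun e => if e ∈ A then 1 else 0), ← card_filter]
    congr 1
    ext
    simp
  rw [hA, ← sum_add_distrib]
  simp only [card_filter_add_card_filter_not, card_univ, sum_const, smul_eq_mul]

lemma exists_sameCycle_not_mem_of_isTree {A : Finset (S × V)}
    (hA : ((schreier σ).toSimple A).Connected) (hcard : #A + 1 = Fintype.card V) (s : S) (x : V) :
    ∃ r, (s, r) ∉ A ∧ (σ s).SameCycle x r := by
  by_contra! hcycle
  have hx : (s, x) ∈ A := by_contra fun h => hcycle x h .rfl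
  have hreach : ((schreier σ).toSimple (A.erase (s, x))).Reachable x (σ s x) :=
    schreier_reachable_of_forall_sameCycle fun w hw hwx =>
      mem_erase.mpr ⟨by simpa using hwx, by_contra fun h => hcycle w h hw⟩
  have hconn : ((schreier σ).toSimple (A.erase (s, x))).Connected := by
    refine schreier_connected_of_forall_mem hA fun e he => ?_
    by_cases hex : e = (s, x)
    · subst hex
      exact hreach
    · exact schreier_reachable_of_mem (mem_erase.mpr ⟨hex, he⟩)
  have h1 : Fintype.card V ≤ #(A.erase (s, x)) + 1 := card_le_card_add_one_of_connected hconn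
  have h2 : #(A.erase (s, x)) + 1 = #A := card_erase_add_one hx
  omega

-- The cycle ranks of the generators add up to `|V| - 1`: the graph is a cactus whose cycles are
-- the orbits of the generators.
variable (hcactus : ∑ s, (Fintype.card V - (σ s).orbitCount) + 1 = Fintype.card V)
include hcactus

omit [DecidableEq S] [DecidableEq V] in
lemma sum_orbitCount_add_card_sub_one :
    ∑ s, (σ s).orbitCount + (Fintype.card V - 1) = Fintype.card S * Fintype.card V := by
  have hle : ∀ s ∈ univ, (σ s).orbitCount ≤ Fintype.card V :=
    fun s _ => (σ s).orbitCount_le_card_univ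
  have hsum := sum_le_sum hle
  rw [sum_tsub_distrib _ hle] at hcactus
  simp only [sum_const, card_univ, smul_eq_mul] at hcactus hsum
  omega

lemma isOrbitTransversal_of_isTree {A : Finset (S × V)}
    (hA : ((schreier σ).toSimple A).Connected) (hcard : #A + 1 = Fintype.card V) (s : S) :
    (σ s).IsOrbitTransversal {v | (s, v) ∉ A} := by
  have hmeet (t : S) (x : V) : ∃ r ∈ ({v | (t, v) ∉ A} : Finset V), (σ t).SameCycle x r := by
    obtain ⟨r, hr, hxr⟩ := exists_sameCycle_not_mem_of_isTree hA hcard t x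
    exact ⟨r, mem_filter.mpr ⟨mem_univ r, hr⟩, hxr⟩
  have hle : ∀ t ∈ univ, (σ t).orbitCount ≤ #{v | (t, v) ∉ A} :=
    fun t _ => Equiv.Perm.orbitCount_le_card (hmeet t)
  have hsum : ∑ t, (σ t).orbitCount = ∑ t, #{v | (t, v) ∉ A} := by
    have := sum_card_filter_not_mem_add_card A
    have := sum_orbitCount_add_card_sub_one hcactus
    omega
  exact Equiv.Perm.isOrbitTransversal_of_card_le (hmeet s)
    ((sum_eq_sum_iff_of_le hle).mp hsum s (mem_univ s)).ge

lemma isTree_of_isOrbitTransversal (hconn : ((schreier σ).toSimple univ).Connected)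
    {R : S → Finset V} (hR : ∀ s, (σ s).IsOrbitTransversal (R s)) :
    ((schreier σ).toSimple {e : S × V | e.2 ∉ R e.1}).Connected ∧
      #{e : S × V | e.2 ∉ R e.1} + 1 = Fintype.card V := by
  constructor
  · refine schreier_connected_of_forall_mem hconn fun e _ => ?_
    by_cases he : e.2 ∈ R e.1
    · refine schreier_reachable_of_forall_sameCycle fun w hw hwe =>
        mem_filter.mpr ⟨mem_univ _, fun hwR => hwe ?_⟩
      obtain ⟨r, -, hr⟩ := hR e.1 e.2
      exact (hr w ⟨hwR, hw⟩).trans (hr e.2 ⟨he, .rfl⟩).symm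
    · exact schreier_reachable_of_mem (mem_filter.mpr ⟨mem_univ _, he⟩)
  · have hcount := sum_card_filter_not_mem_add_card {e : S × V | e.2 ∉ R e.1}
    have hR' (s : S) : #{v | (s, v) ∉ ({e : S × V | e.2 ∉ R e.1} : Finset (S × V))} =
        (σ s).orbitCount := by
      rw [← (hR s).card_eq]
      congr 1
      ext v
      simp
    simp only [hR'] at hcount
    have := sum_orbitCount_add_card_sub_one hcactus
    have : 0 < Fintype.card V := Fintype.card_pos_iff.mpr hconn.nonempty
    omega

noncomputable def treeEquivOrbitTransversals (hconn : ((schreier σ).toSimple univ).Connected) :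
    {A : Finset (S × V) // (schreier σ).comps A = 1 ∧ #A + 1 = Fintype.card V} ≃
      ((s : S) → {R : Finset V // (σ s).IsOrbitTransversal R}) where
  toFun A s := ⟨_, isOrbitTransversal_of_isTree hcactus (comps_eq_one_iff.mp A.2.1) A.2.2 s⟩
  invFun R :=
    ⟨_, comps_eq_one_iff.mpr (isTree_of_isOrbitTransversal hcactus hconn fun s => (R s).2).1,
      (isTree_of_isOrbitTransversal hcactus hconn fun s => (R s).2).2⟩
  left_inv A := Subtype.ext (by ext; simp)
  right_inv R := funext fun s => Subtype.ext (by ext; simp)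

theorem treeCount_schreier (hconn : ((schreier σ).toSimple univ).Connected) :
    (schreier σ).treeCount = ∏ s, Nat.card {R : Finset V // (σ s).IsOrbitTransversal R} := by
  rw [← Nat.card_pi]
  exact Nat.card_congr (treeEquivOrbitTransversals hcactus hconn)

end Multigraph

section Basilica

open Multigraph Equiv.Perm

variable {n : ℕ}

@[simp] lemma basA_cons_true (w : Fin n → Bool) :
    basA (n + 1) (Fin.cons true w) = Fin.cons true w := by
  simp [basA]

@[simp] lemma basA_cons_false (w : Fin n → Bool) :
    basA (n + 1) (Fin.cons false w) = Fin.cons false (basB n w) := by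
  simp [basA]

@[simp] lemma basB_cons_true (w : Fin n → Bool) :
    basB (n + 1) (Fin.cons true w) = Fin.cons false w := by
  simp [basB]

@[simp] lemma basB_cons_false (w : Fin n → Bool) :
    basB (n + 1) (Fin.cons false w) = Fin.cons true (basA n w) := by
  simp [basB]

lemma basA_injective_and_basB_injective :
    ∀ n, Function.Injective (basA n) ∧ Function.Injective (basB n)
  | 0 => ⟨fun _ _ h => h, fun _ _ h => h⟩
  | n + 1 => by
    obtain ⟨ihA, ihB⟩ := basA_injective_and_basB_injective n
    simp only [Function.Injective, Fin.forall_fin_succ_pi, Bool.forall_bool]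
    simp [Fin.cons_inj, ihA.eq_iff, ihB.eq_iff]

lemma basGen_injective (n : ℕ) : ∀ s, Function.Injective (basGen n s)
  | true => (basA_injective_and_basB_injective n).1
  | false => (basA_injective_and_basB_injective n).2

noncomputable def basPerm (n : ℕ) (s : Bool) : Equiv.Perm (Fin n → Bool) :=
  Equiv.ofBijective (basGen n s) (basGen_injective n s).bijective_of_finite

@[simp] lemma basPerm_true_apply (v : Fin n → Bool) : basPerm n true v = basA n v := rfl

@[simp] lemma basPerm_false_apply (v : Fin n → Bool) : basPerm n false v = basB n v := rfl

lemma basilica_eq_schreier (n : ℕ) : basilica n = schreier (basPerm n) := rfl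

lemma basilica_connected : ∀ n, ((schreier (basPerm n)).toSimple univ).Connected
  | 0 => (SimpleGraph.connected_iff _).mpr
      ⟨fun u v => Subsingleton.elim u v ▸ .rfl, inferInstance⟩
  | n + 1 => by
    set G := (schreier (basPerm (n + 1))).toSimple univ
    have hedge (s : Bool) (z : Fin (n + 1) → Bool) : G.Reachable z (basPerm (n + 1) s z) :=
      schreier_reachable_of_mem (mem_univ (s, z))
    -- a `b`-edge at level `n` lifts to an `a`-edge, an `a`-edge to a path of two `b`-edges
    have hlift (v w : Fin n → Bool) (h : ((schreier (basPerm n)).toSimple univ).Reachable v w) :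
        G.Reachable (Fin.cons false v) (Fin.cons false w) := by
      refine schreier_rel_of_reachable ((SimpleGraph.reachable_is_equivalence G).comap _)
        (fun e _ => ?_) h
      rcases e with ⟨_ | _, v⟩ <;> show G.Reachable _ _
      · simpa using hedge true (Fin.cons false v)
      · simpa using (hedge false (Fin.cons false v)).trans (hedge false (Fin.cons true (basA n v)))
    have hzero (z : Fin (n + 1) → Bool) : ∃ w, G.Reachable z (Fin.cons false w) := by
      cases z using Fin.consCases with
      | cons x w =>
        cases x
        · exact ⟨w, .rfl⟩
        · exact ⟨w, by simpa using hedge false (Fin.cons true w)⟩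
    refine (SimpleGraph.connected_iff _).mpr ⟨fun z z' => ?_, inferInstance⟩
    obtain ⟨w, hw⟩ := hzero z
    obtain ⟨w', hw'⟩ := hzero z'
    exact hw.trans ((hlift w w' ((basilica_connected n).preconnected w w')).trans hw'.symm)

def consFalseEquiv (n : ℕ) : (Fin n → Bool) ≃ {v : Fin (n + 1) → Bool // v 0 = false} where
  toFun w := ⟨Fin.cons false w, rfl⟩
  invFun v := Fin.tail v.1
  left_inv w := Fin.tail_cons _ _
  right_inv v := Subtype.ext (by conv_rhs => rw [← Fin.cons_self_tail v.1, v.2])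

lemma basPerm_true_succ :
    basPerm (n + 1) true = (basPerm n false).extendDomain (consFalseEquiv n) := by
  ext z : 1
  cases z using Fin.consCases with
  | cons x w =>
    cases x
    · exact (extendDomain_apply_image _ (consFalseEquiv n) w).symm ▸ by simp [consFalseEquiv]
    · rw [extendDomain_apply_not_subtype _ _ (by simp)]
      simp

lemma sameCycle_basB_cons_false (x : Bool) (w : Fin n → Bool) :
    (basPerm (n + 1) false).SameCycle (Fin.cons x w) (Fin.cons false w) := by
  cases x
  · exact .rfl
  · exact ⟨1, by simp⟩

lemma sameCycle_basB_succ {z z' : Fin (n + 1) → Bool} :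
    (basPerm (n + 1) false).SameCycle z z' ↔
      (basPerm n true).SameCycle (Fin.tail z) (Fin.tail z') := by
  constructor
  · refine SameCycle.rel_of_forall_apply ((SameCycle.equivalence _).comap Fin.tail) fun z => ?_
    cases z using Fin.consCases with
    | cons x w =>
      cases x
      · exact (sameCycle_apply_right (f := basPerm n true)).mpr .rfl
      · exact .rfl
  · intro h
    have hequiv : Equivalence fun u w : Fin n → Bool =>
        (basPerm (n + 1) false).SameCycle (Fin.cons false u) (Fin.cons false w) :=
      (SameCycle.equivalence _).comap _
    have hlift := SameCycle.rel_of_forall_apply hequiv (fun w => ⟨2, by simp [pow_two]⟩) h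
    rw [← Fin.cons_self_tail z, ← Fin.cons_self_tail z']
    exact (sameCycle_basB_cons_false _ _).trans (hlift.trans (sameCycle_basB_cons_false _ _).symm)

lemma isOrbitTransversal_image_tail {R : Finset (Fin (n + 1) → Bool)}
    (h : (basPerm (n + 1) false).IsOrbitTransversal R) :
    (basPerm n true).IsOrbitTransversal (R.image Fin.tail) := by
  intro x
  obtain ⟨r, ⟨hr, hxr⟩, huniq⟩ := h (Fin.cons false x)
  rw [sameCycle_basB_succ, Fin.tail_cons] at hxr
  refine ⟨Fin.tail r, ⟨mem_image_of_mem _ hr, hxr⟩, ?_⟩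
  rintro _ ⟨hw, hxw⟩
  obtain ⟨r', hr', rfl⟩ := mem_image.mp hw
  rw [huniq r' ⟨hr', by rwa [sameCycle_basB_succ, Fin.tail_cons]⟩]

lemma isOrbitTransversal_image_cons {R : Finset (Fin n → Bool)}
    (h : (basPerm n true).IsOrbitTransversal R) (c : (Fin n → Bool) → Bool) :
    (basPerm (n + 1) false).IsOrbitTransversal (R.image fun w => Fin.cons (c w) w) := by
  intro z
  obtain ⟨w, ⟨hw, hzw⟩, huniq⟩ := h (Fin.tail z)
  refine ⟨Fin.cons (c w) w,
    ⟨mem_image_of_mem _ hw, by rwa [sameCycle_basB_succ, Fin.tail_cons]⟩, ?_⟩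
  rintro _ ⟨hr, hzr⟩
  obtain ⟨w', hw', rfl⟩ := mem_image.mp hr
  rw [sameCycle_basB_succ, Fin.tail_cons] at hzr
  rw [huniq w' ⟨hw', hzr⟩]

open Classical in
/-- For an orbit transversal `R` of `b` at level `n + 1`, the first letter of the point of `R`
lying over a given `a`-orbit at level `n`. -/
noncomputable def headBit (R : Finset (Fin (n + 1) → Bool))
    (q : Quotient (SameCycle.setoid (basPerm n true))) : Bool :=
  decide (∃ r ∈ R, r 0 = true ∧ Quotient.mk _ (Fin.tail r) = q)

lemma headBit_mk_tail {R : Finset (Fin (n + 1) → Bool)}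
    (h : (basPerm (n + 1) false).IsOrbitTransversal R) {r : Fin (n + 1) → Bool} (hr : r ∈ R) :
    headBit R (Quotient.mk _ (Fin.tail r)) = r 0 := by
  rw [Bool.eq_iff_iff, headBit]
  simp only [decide_eq_true_eq]
  refine ⟨fun ⟨r', hr', hr'0, hr'r⟩ => ?_, fun hr0 => ⟨r, hr, hr0, rfl⟩⟩
  obtain ⟨d, -, hd⟩ := h r
  have hsame : (basPerm (n + 1) false).SameCycle r r' :=
    sameCycle_basB_succ.mpr (Quotient.eq.mp hr'r).symm
  rwa [(hd r ⟨hr, .rfl⟩).trans (hd r' ⟨hr', hsame⟩).symm]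

noncomputable def orbitTransversalBasBSuccEquiv (n : ℕ) :
    {R // (basPerm (n + 1) false).IsOrbitTransversal R} ≃
      {R // (basPerm n true).IsOrbitTransversal R} ×
        (Quotient (SameCycle.setoid (basPerm n true)) → Bool) where
  toFun R := (⟨_, isOrbitTransversal_image_tail R.2⟩, headBit R.1)
  invFun P := ⟨_, isOrbitTransversal_image_cons P.1.2 fun w => P.2 (Quotient.mk _ w)⟩
  left_inv R := by
    refine Subtype.ext ?_
    dsimp only
    rw [image_image]
    conv_rhs => rw [← image_id (s := R.1)]
    refine image_congr fun r hr => ?_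
    simp only [Function.comp_apply, headBit_mk_tail R.2 hr, Fin.cons_self_tail, id]
  right_inv P := by
    obtain ⟨⟨R, hR⟩, c⟩ := P
    refine Prod.ext (Subtype.ext ?_) (funext <| Quotient.ind fun x => ?_)
    · simp [image_image, Function.comp_def]
    · dsimp only
      rw [Bool.eq_iff_iff, headBit]
      simp only [decide_eq_true_eq]
      obtain ⟨w, ⟨hw, hxw⟩, -⟩ := hR x
      have hq : Quotient.mk (SameCycle.setoid (basPerm n true)) w = Quotient.mk _ x :=
        Quotient.sound hxw.symm
      constructor
      · rintro ⟨_, hr, hr0, hrx⟩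
        obtain ⟨w', -, rfl⟩ := mem_image.mp hr
        simp only [Fin.cons_zero, Fin.tail_cons] at hr0 hrx
        rwa [← hrx]
      · exact fun hc => ⟨_, mem_image_of_mem _ hw, by simpa [hq] using hc, by simp [hq]⟩

lemma card_orbitTransversal_basA_succ :
    Nat.card {R // (basPerm (n + 1) true).IsOrbitTransversal R} =
      Nat.card {R // (basPerm n false).IsOrbitTransversal R} := by
  rw [basPerm_true_succ]
  exact card_orbitTransversal_extendDomain

lemma card_orbitTransversal_basB_succ :
    Nat.card {R // (basPerm (n + 1) false).IsOrbitTransversal R} =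
      Nat.card {R // (basPerm n true).IsOrbitTransversal R} * 2 ^ (basPerm n true).orbitCount := by
  rw [Nat.card_congr (orbitTransversalBasBSuccEquiv n), Nat.card_prod, Nat.card_fun]
  simp [orbitCount]

lemma orbitCount_basA_succ :
    (basPerm (n + 1) true).orbitCount = (basPerm n false).orbitCount + 2 ^ n := by
  have hfilter : ({v | ¬ v 0 = false} : Finset (Fin (n + 1) → Bool)) =
      univ.image (Fin.cons true) := by
    ext v
    cases v using Fin.consCases with
    | cons x w => cases x <;> simp [Fin.cons_inj]
  have hcard : #({v | ¬ v 0 = false} : Finset (Fin (n + 1) → Bool)) = 2 ^ n := by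
    rw [hfilter, card_image_of_injective _ (Fin.cons_right_injective _), card_univ]
    simp
  rw [basPerm_true_succ, orbitCount_extendDomain, ← hcard]

lemma orbitCount_basB_succ :
    (basPerm (n + 1) false).orbitCount = (basPerm n true).orbitCount := by
  obtain ⟨R, hR⟩ := (basPerm n true).exists_isOrbitTransversal
  rw [← hR.card_eq, ← (isOrbitTransversal_image_cons hR fun _ => false).card_eq,
    card_image_of_injective _ (Fin.cons_right_injective _)]

lemma orbitCount_basPerm_zero (s : Bool) : (basPerm 0 s).orbitCount = 1 :=
  Nat.card_unique

lemma card_orbitTransversal_basPerm_zero (s : Bool) :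
    Nat.card {R // (basPerm 0 s).IsOrbitTransversal R} = 1 := by
  have huniv (R : {R // (basPerm 0 s).IsOrbitTransversal R}) : R.1 = univ := by
    obtain ⟨r, ⟨hr, -⟩, -⟩ := R.2 default
    exact eq_univ_of_forall fun x => Subsingleton.elim r x ▸ hr
  refine Nat.card_eq_one_iff_unique.mpr
    ⟨⟨fun R R' => Subtype.ext ((huniv R).trans (huniv R').symm)⟩,
      ⟨univ, fun x => ⟨x, ⟨mem_univ x, .rfl⟩, fun y _ => Subsingleton.elim y x⟩⟩⟩

lemma orbitCount_basA_add_orbitCount_basB :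
    ∀ n, (basPerm n true).orbitCount + (basPerm n false).orbitCount = 2 ^ n + 1
  | 0 => by simp [orbitCount_basPerm_zero]
  | n + 1 => by
    have := orbitCount_basA_add_orbitCount_basB n
    rw [orbitCount_basA_succ, orbitCount_basB_succ, pow_succ]
    omega

lemma basilica_cactus (n : ℕ) :
    ∑ s, (Fintype.card (Fin n → Bool) - (basPerm n s).orbitCount) + 1 =
      Fintype.card (Fin n → Bool) := by
  have := orbitCount_basA_add_orbitCount_basB n
  have ha := (basPerm n true).orbitCount_le_card_univ
  have hb := (basPerm n false).orbitCount_le_card_univ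
  simp only [Fintype.sum_bool, Fintype.card_fun, Fintype.card_bool, Fintype.card_fin] at ha hb ⊢
  omega

lemma treeCount_basilica_eq_mul (n : ℕ) :
    (basilica n).treeCount = Nat.card {R // (basPerm n true).IsOrbitTransversal R} *
      Nat.card {R // (basPerm n false).IsOrbitTransversal R} := by
  rw [basilica_eq_schreier, treeCount_schreier (basilica_cactus n) (basilica_connected n),
    Fintype.prod_bool]

lemma treeCount_basilica_succ (n : ℕ) :
    (basilica (n + 1)).treeCount = (basilica n).treeCount * 2 ^ (basPerm n true).orbitCount := by
  rw [treeCount_basilica_eq_mul, treeCount_basilica_eq_mul, card_orbitTransversal_basA_succ,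
    card_orbitTransversal_basB_succ]
  ring

lemma three_mul_orbitCount_basA :
    ∀ n, 3 * (basPerm n true).orbitCount = 2 ^ (n + 1) + 1 + n % 2
  | 0 => by simp [orbitCount_basPerm_zero]
  | n + 1 => by
    have := orbitCount_basA_add_orbitCount_basB n
    have := three_mul_orbitCount_basA n
    rw [orbitCount_basA_succ, pow_succ, pow_succ]
    rw [pow_succ] at this
    omega

lemma exists_treeCount_basilica_eq_two_pow :
    ∀ n, ∃ e, (basilica n).treeCount = 2 ^ e ∧ 6 * e + 4 + n % 2 = 2 ^ (n + 2) + 3 * n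
  | 0 => ⟨0, by simp [treeCount_basilica_eq_mul, card_orbitTransversal_basPerm_zero]⟩
  | n + 1 => by
    obtain ⟨e, he, hexp⟩ := exists_treeCount_basilica_eq_two_pow n
    refine ⟨e + (basPerm n true).orbitCount, by rw [treeCount_basilica_succ, he, pow_add], ?_⟩
    have := three_mul_orbitCount_basA n
    rw [pow_succ] at this hexp ⊢
    rw [pow_succ]
    omega

end Basilica

/-- For each `n ≥ 1`, the number of spanning trees of the
level-`n` Schreier graph `B_n` of the Basilica group is
`τ(B_n) = 2^((2^(n+2) + 3n - 5)/6)` if `n` is odd and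
`τ(B_n) = 2^((2^(n+2) + 3n - 4)/6)` if `n` is even. -/
theorem treeCount_basilica (n : ℕ) (hn : 1 ≤ n) :
    (Odd n → (basilica n).treeCount = 2 ^ ((2 ^ (n + 2) + 3 * n - 5) / 6)) ∧
    (Even n → (basilica n).treeCount = 2 ^ ((2 ^ (n + 2) + 3 * n - 4) / 6)) := by
  obtain ⟨e, he, hexp⟩ := exists_treeCount_basilica_eq_two_pow n
  rw [he]
  refine ⟨fun hodd => ?_, fun heven => ?_⟩
  · rw [Nat.odd_iff.mp hodd] at hexp
    congr 1
    omega
  · rw [Nat.even_iff.mp heven] at hexp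
    congr 1
    omega
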